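/- Subterm property for RKNL (via the ghost machine RKNLi): every term belonging to the syntactic category of Terms occurring in any reachable configuration of RKNLi is a subterm of the initial source term; consequently, every term t occurring in a closure (t, e) in any reachable RKNL configuration is a subterm of the source term. -/

import Mathlib

set_option autoImplicit false
set_option maxHeartbeats 1000000

namespace RKNL

/- Pure lambda terms over a type of variables. -/
inductive Tm (V : Type) : Type
  | var : V → Tm V
  | app : Tm V → Tm V → Tm V
  | lam : V → Tm V → Tm V
  deriving DecidableEq

abbrev Ident : Type := ℕ
abbrev Loc : Type := ℕ

/-- Lookup in an association list (first match). -/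
def lookupL {β : Type} : List (ℕ × β) → ℕ → Option β
  | [], _ => none
  | (a, b) :: l, x => if x = a then some b else lookupL l x

/-- Update of an association list. -/
def updL {β : Type} (l : List (ℕ × β)) (x : ℕ) (b : β) : List (ℕ × β) :=
  l.map fun p => if p.1 = x then (x, b) else p

/-- Environments map identifiers to store locations. -/
abbrev Env : Type := List (Ident × Loc)

/-- Closures pair a term with an environment. -/
abbrev Closure : Type := Tm Ident × Env

/-- Values: terms (normal forms), or abstraction closures annotated with a location. -/
inductive Value : Type
  | tm : Tm Ident → Value
  | abs : Ident → Tm Ident → Env → Loc → Value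
  deriving DecidableEq

/-- Storable values (memothunks):
`pend x t e` is the `todo ⊥` placeholder allocated for the abstraction `(λx.t, e)`,
`todo c` an unevaluated argument thunk, `done v` a memoized value. -/
inductive Storable : Type
  | pend : Ident → Tm Ident → Env → Storable
  | todo : Closure → Storable
  | done : Value → Storable
  deriving DecidableEq

/-- Stores map locations to storable values. -/
abbrev Store : Type := List (Loc × Storable)

/-- Stack frames: `arg c` is `(□ c)`, `appL t` is `(t □)`, `lamF x` is `λx.□`,
`cache ℓ` is `ℓ := □`. -/
inductive Frame : Type
  | arg : Closure → Frame
  | appL : Tm Ident → Frame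
  | lamF : Ident → Frame
  | cache : Loc → Frame
  deriving DecidableEq

abbrev Stack : Type := List Frame

/-- Machine configurations: evaluation mode `⟨c, s, σ⟩▸` and continue mode `⟨σ, v, s⟩◂`. -/
inductive Conf : Type
  | eval : Closure → Stack → Store → Conf
  | cont : Store → Value → Stack → Conf

/-- The initial configuration loading a term. -/
def Conf.init (t : Tm Ident) : Conf := .eval (t, []) [] []

def Conf.store : Conf → Store
  | .eval _ _ σ => σ
  | .cont σ _ _ => σ

def Conf.stack : Conf → Stack
  | .eval _ s _ => s
  | .cont _ _ s => s

/- Identifiers occurring in a configuration (used for freshness of generated names). -/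
def tmVars : Tm Ident → List Ident
  | .var x => [x]
  | .app a b => tmVars a ++ tmVars b
  | .lam x t => x :: tmVars t

def envVars (e : Env) : List Ident := e.map Prod.fst

def valVars : Value → List Ident
  | .tm t => tmVars t
  | .abs x t e _ => x :: (tmVars t ++ envVars e)

def storableVars : Storable → List Ident
  | .pend x t e => x :: (tmVars t ++ envVars e)
  | .todo c => tmVars c.1 ++ envVars c.2
  | .done v => valVars v

def frameVars : Frame → List Ident
  | .arg c => tmVars c.1 ++ envVars c.2
  | .appL t => tmVars t
  | .lamF x => [x]
  | .cache _ => []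

def stackVars (s : Stack) : List Ident := s.foldr (fun f acc => frameVars f ++ acc) []

def storeVars (σ : Store) : List Ident := σ.foldr (fun p acc => storableVars p.2 ++ acc) []

def confVars : Conf → List Ident
  | .eval c s σ => tmVars c.1 ++ envVars c.2 ++ stackVars s ++ storeVars σ
  | .cont σ v s => valVars v ++ stackVars s ++ storeVars σ

/-- The top of the stack is not an argument frame. -/
def Stack.noArgTop : Stack → Prop
  | Frame.arg _ :: _ => False
  | _ => True

/-- The top of the stack is not a memoization frame. -/
def Stack.noCacheTop : Stack → Prop
  | Frame.cache _ :: _ => False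
  | _ => True

/-- The eleven transitions of the RKNL abstract machine, indexed by rule number. -/
inductive Step : ℕ → Conf → Conf → Prop
  | r1 {t1 t2 : Tm Ident} {e : Env} {s : Stack} {σ : Store} :
      Step 1 (.eval (.app t1 t2, e) s σ) (.eval (t1, e) (.arg (t2, e) :: s) σ)
  | r2 {x : Ident} {t : Tm Ident} {e : Env} {s : Stack} {σ : Store} {ℓ : Loc}
      (h : lookupL σ ℓ = none) :
      Step 2 (.eval (.lam x t, e) s σ) (.cont ((ℓ, .pend x t e) :: σ) (.abs x t e ℓ) s)
  | r3 {x : Ident} {e e2 : Env} {s : Stack} {σ : Store} {ℓ : Loc} {t : Tm Ident}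
      (he : lookupL e x = some ℓ) (hσ : lookupL σ ℓ = some (.todo (t, e2))) :
      Step 3 (.eval (.var x, e) s σ) (.eval (t, e2) (.cache ℓ :: s) σ)
  | r4done {x : Ident} {e : Env} {s : Stack} {σ : Store} {ℓ : Loc} {v : Value}
      (he : lookupL e x = some ℓ) (hσ : lookupL σ ℓ = some (.done v)) :
      Step 4 (.eval (.var x, e) s σ) (.cont σ v s)
  | r4free {x : Ident} {e : Env} {s : Stack} {σ : Store}
      (he : lookupL e x = none) :
      Step 4 (.eval (.var x, e) s σ) (.cont σ (.tm (.var x)) s)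
  | r5 {σ : Store} {v : Value} {ℓ : Loc} {s : Stack} :
      Step 5 (.cont σ v (.cache ℓ :: s)) (.cont (updL σ ℓ (.done v)) v s)
  | r6 {σ : Store} {x : Ident} {t t2 : Tm Ident} {e e2 : Env} {ℓ ℓ2 : Loc} {s : Stack}
      (h : lookupL σ ℓ2 = none) :
      Step 6 (.cont σ (.abs x t e ℓ) (.arg (t2, e2) :: s))
             (.eval (t, (x, ℓ2) :: e) s ((ℓ2, .todo (t2, e2)) :: σ))
  | r7 {σ : Store} {x x' x0 : Ident} {t t0 : Tm Ident} {e e0 : Env} {ℓ ℓ2 : Loc} {s : Stack}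
      (hσ : lookupL σ ℓ = some (.pend x0 t0 e0))
      (hs1 : Stack.noArgTop s) (hs2 : Stack.noCacheTop s)
      (hℓ2 : lookupL σ ℓ2 = none)
      (hx' : x' ∉ confVars (.cont σ (.abs x t e ℓ) s)) :
      Step 7 (.cont σ (.abs x t e ℓ) s)
             (.eval (t, (x, ℓ2) :: e) (.lamF x' :: .cache ℓ :: s)
                    ((ℓ2, .done (.tm (.var x'))) :: σ))
  | r8 {σ : Store} {x : Ident} {t : Tm Ident} {e : Env} {ℓ : Loc} {s : Stack} {v : Value}
      (hσ : lookupL σ ℓ = some (.done v))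
      (hs1 : Stack.noArgTop s) (hs2 : Stack.noCacheTop s) :
      Step 8 (.cont σ (.abs x t e ℓ) s) (.cont σ v s)
  | r9 {σ : Store} {t t2 : Tm Ident} {e2 : Env} {s : Stack} :
      Step 9 (.cont σ (.tm t) (.arg (t2, e2) :: s)) (.eval (t2, e2) (.appL t :: s) σ)
  | r10 {σ : Store} {t1 t2 : Tm Ident} {s : Stack} :
      Step 10 (.cont σ (.tm t2) (.appL t1 :: s)) (.cont σ (.tm (.app t1 t2)) s)
  | r11 {σ : Store} {t : Tm Ident} {x : Ident} {s : Stack} :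
      Step 11 (.cont σ (.tm t) (.lamF x :: s)) (.cont σ (.tm (.lam x t)) s)

/-- Reachability by machine transitions. -/
inductive Reach (k0 : Conf) : Conf → Prop
  | refl : Reach k0 k0
  | step {k k' : Conf} {r : ℕ} : Reach k0 k → Step r k k' → Reach k0 k'

/- The ghost abstract machine RKNLi: RKNL with the shape invariant made
explicit (separate syntactic categories of normal and neutral terms, separate
stores for argument thunks and for normal forms of abstractions, and
potentially applicative / non-applicative stacks). -/

mutual
  /-- Normal terms: `n ::= λx.n | ⌈a⌉`. -/
  inductive Nm : Type
    | lam : Ident → Nm → Nm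
    | coe : Ne → Nm
  /-- Neutral terms: `a ::= x | a n`. -/
  inductive Ne : Type
    | var : Ident → Ne
    | app : Ne → Nm → Ne
end

/-- RKNLi values: neutral terms, or abstraction closures annotated with a
location in the normal-form store. -/
inductive VI : Type
  | ne : Ne → VI
  | abs : Ident → Tm Ident → Env → Loc → VI

/-- Storable values of the argument store. -/
inductive StorI : Type
  | todo : Closure → StorI
  | done : VI → StorI

/-- The argument store. -/
abbrev StoreI : Type := List (Loc × StorI)

/-- The normal-form store: `none` is `todo ⊥`, `some n` is `done n`. -/
abbrev StoreN : Type := List (Loc × Option Nm)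

mutual
  /-- Potentially applicative stacks:
  `π ::= (ℓ := □) :: π | (□ c) :: π | ⌈□⌉ :: ϱ`. -/
  inductive PiSt : Type
    | cache : Loc → PiSt → PiSt
    | arg : Closure → PiSt → PiSt
    | coe : RhoSt → PiSt
  /-- Non-applicative stacks:
  `ϱ ::= (ℓ' := □) :: ϱ | [] | (λx.□) :: ϱ | ((a □)) :: π`. -/
  inductive RhoSt : Type
    | cacheN : Loc → RhoSt → RhoSt
    | nil : RhoSt
    | lamF : Ident → RhoSt → RhoSt
    | appL : Ne → PiSt → RhoSt
end

/-- RKNLi configurations. -/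
inductive ConfI : Type
  | eval : Closure → PiSt → StoreI → StoreN → ConfI
  | cont : StoreI → StoreN → VI → PiSt → ConfI
  | contN : StoreI → StoreN → Nm → RhoSt → ConfI

/-- The initial RKNLi configuration loading a term. -/
def ConfI.init (t : Tm Ident) : ConfI := .eval (t, []) (.coe .nil) [] []

/-- The transitions of the ghost machine RKNLi
(rules (1)–(11) together with (5') and (9a)). -/
inductive StepI : ConfI → ConfI → Prop
  | r1 {t1 t2 : Tm Ident} {e : Env} {π : PiSt} {σ : StoreI} {σ' : StoreN} :
      StepI (.eval (.app t1 t2, e) π σ σ') (.eval (t1, e) (.arg (t2, e) π) σ σ')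
  | r2 {x : Ident} {t : Tm Ident} {e : Env} {π : PiSt} {σ : StoreI} {σ' : StoreN}
      {ℓ' : Loc} (h : lookupL σ' ℓ' = none) :
      StepI (.eval (.lam x t, e) π σ σ')
            (.cont σ ((ℓ', none) :: σ') (.abs x t e ℓ') π)
  | r3 {x : Ident} {e e2 : Env} {π : PiSt} {σ : StoreI} {σ' : StoreN} {ℓ : Loc}
      {t : Tm Ident} (he : lookupL e x = some ℓ)
      (hσ : lookupL σ ℓ = some (.todo (t, e2))) :
      StepI (.eval (.var x, e) π σ σ') (.eval (t, e2) (.cache ℓ π) σ σ')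
  | r4done {x : Ident} {e : Env} {π : PiSt} {σ : StoreI} {σ' : StoreN} {ℓ : Loc}
      {v : VI} (he : lookupL e x = some ℓ) (hσ : lookupL σ ℓ = some (.done v)) :
      StepI (.eval (.var x, e) π σ σ') (.cont σ σ' v π)
  | r4free {x : Ident} {e : Env} {π : PiSt} {σ : StoreI} {σ' : StoreN}
      (he : lookupL e x = none) :
      StepI (.eval (.var x, e) π σ σ') (.cont σ σ' (.ne (.var x)) π)
  | r5 {σ : StoreI} {σ' : StoreN} {v : VI} {ℓ : Loc} {π : PiSt} :
      StepI (.cont σ σ' v (.cache ℓ π)) (.cont (updL σ ℓ (.done v)) σ' v π)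
  | r5' {σ : StoreI} {σ' : StoreN} {n : Nm} {ℓ' : Loc} {ϱ : RhoSt} :
      StepI (.contN σ σ' n (.cacheN ℓ' ϱ)) (.contN σ (updL σ' ℓ' (some n)) n ϱ)
  | r6 {σ : StoreI} {σ' : StoreN} {x : Ident} {t t2 : Tm Ident} {e e2 : Env}
      {ℓ' ℓ2 : Loc} {π : PiSt} (h : lookupL σ ℓ2 = none) :
      StepI (.cont σ σ' (.abs x t e ℓ') (.arg (t2, e2) π))
            (.eval (t, (x, ℓ2) :: e) π ((ℓ2, .todo (t2, e2)) :: σ) σ')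
  | r7 {σ : StoreI} {σ' : StoreN} {x x' : Ident} {t : Tm Ident} {e : Env}
      {ℓ' ℓ2 : Loc} {ϱ : RhoSt}
      (hℓ' : lookupL σ' ℓ' = some none) (hℓ2 : lookupL σ ℓ2 = none) :
      StepI (.cont σ σ' (.abs x t e ℓ') (.coe ϱ))
            (.eval (t, (x, ℓ2) :: e) (.coe (.lamF x' (.cacheN ℓ' ϱ)))
                   ((ℓ2, .done (.ne (.var x'))) :: σ) σ')
  | r8 {σ : StoreI} {σ' : StoreN} {x : Ident} {t : Tm Ident} {e : Env}
      {ℓ' : Loc} {ϱ : RhoSt} {n : Nm} (hℓ' : lookupL σ' ℓ' = some (some n)) :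
      StepI (.cont σ σ' (.abs x t e ℓ') (.coe ϱ)) (.contN σ σ' n ϱ)
  | r9 {σ : StoreI} {σ' : StoreN} {a : Ne} {t2 : Tm Ident} {e2 : Env} {π : PiSt} :
      StepI (.cont σ σ' (.ne a) (.arg (t2, e2) π))
            (.eval (t2, e2) (.coe (.appL a π)) σ σ')
  | r9a {σ : StoreI} {σ' : StoreN} {a : Ne} {ϱ : RhoSt} :
      StepI (.cont σ σ' (.ne a) (.coe ϱ)) (.contN σ σ' (.coe a) ϱ)
  | r10 {σ : StoreI} {σ' : StoreN} {n : Nm} {a : Ne} {π : PiSt} :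
      StepI (.contN σ σ' n (.appL a π)) (.cont σ σ' (.ne (.app a n)) π)
  | r11 {σ : StoreI} {σ' : StoreN} {n : Nm} {x : Ident} {ϱ : RhoSt} :
      StepI (.contN σ σ' n (.lamF x ϱ)) (.contN σ σ' (.lam x n) ϱ)

/-- Reachability for RKNLi. -/
inductive ReachI (k0 : ConfI) : ConfI → Prop
  | refl : ReachI k0 k0
  | step {k k' : ConfI} : ReachI k0 k → StepI k k' → ReachI k0 k'

/- Occurrence of closures (and therefore of terms of the syntactic category of
Terms) in RKNLi configurations. -/
mutual
  inductive InPi (c : Closure) : PiSt → Prop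
    | cacheI {ℓ : Loc} {π : PiSt} : InPi c π → InPi c (.cache ℓ π)
    | argHere {π : PiSt} : InPi c (.arg c π)
    | argThere {c' : Closure} {π : PiSt} : InPi c π → InPi c (.arg c' π)
    | coeI {ϱ : RhoSt} : InRho c ϱ → InPi c (.coe ϱ)
  inductive InRho (c : Closure) : RhoSt → Prop
    | cacheN {ℓ : Loc} {ϱ : RhoSt} : InRho c ϱ → InRho c (.cacheN ℓ ϱ)
    | lamF {x : Ident} {ϱ : RhoSt} : InRho c ϱ → InRho c (.lamF x ϱ)
    | appL {a : Ne} {π : PiSt} : InPi c π → InRho c (.appL a π)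
end

/-- A closure occurring in an RKNLi value. -/
def InVI (c : Closure) : VI → Prop
  | .ne _ => False
  | .abs x t e _ => c = (.lam x t, e)

/-- A closure occurring in the argument store. -/
def InStoreI (c : Closure) (σ : StoreI) : Prop :=
  ∃ p ∈ σ, p.2 = StorI.todo c ∨ ∃ v : VI, p.2 = StorI.done v ∧ InVI c v

/-- A closure occurring in an RKNLi configuration. -/
def ClosInI (c : Closure) : ConfI → Prop
  | .eval c0 π σ _ => c = c0 ∨ InPi c π ∨ InStoreI c σ
  | .cont σ _ v π => InVI c v ∨ InPi c π ∨ InStoreI c σ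
  | .contN σ _ _ ϱ => InRho c ϱ ∨ InStoreI c σ

/- Occurrence of closures in RKNL configurations. -/

def InVal (c : Closure) : Value → Prop
  | .tm _ => False
  | .abs x t e _ => c = (.lam x t, e)

def InStorable (c : Closure) : Storable → Prop
  | .todo c' => c = c'
  | .pend x t e => c = (.lam x t, e)
  | .done v => InVal c v

def InStore (c : Closure) (σ : Store) : Prop := ∃ p ∈ σ, InStorable c p.2

def InFrame (c : Closure) : Frame → Prop
  | .arg c' => c = c'
  | _ => False

/-- A closure occurring in an RKNL configuration. -/
def ClosIn (c : Closure) : Conf → Prop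
  | .eval c0 s σ => c = c0 ∨ (∃ f ∈ s, InFrame c f) ∨ InStore c σ
  | .cont σ v s => InVal c v ∨ (∃ f ∈ s, InFrame c f) ∨ InStore c σ

/-- Subterm relation. -/
inductive Subtm : Tm Ident → Tm Ident → Prop
  | refl (t : Tm Ident) : Subtm t t
  | appL {s a b : Tm Ident} : Subtm s a → Subtm s (.app a b)
  | appR {s a b : Tm Ident} : Subtm s b → Subtm s (.app a b)
  | lam {s t : Tm Ident} {x : Ident} : Subtm s t → Subtm s (.lam x t)

/-! Every closure of a configuration carries a subterm of the source term, and transitions preserve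
this: the only rules that build a closure from a term are (1), which splits an application, and
(6)/(7), which enter the body of an abstraction; every other closure is copied between the current
closure or value, the stack and the store (e.g. rules (3), (4), (8) read it from the store). -/

theorem Subtm.trans {a b c : Tm Ident} (hab : Subtm a b) (hbc : Subtm b c) : Subtm a c := by
  induction hbc with
  | refl => exact hab
  | appL _ ih => exact .appL ih
  | appR _ ih => exact .appR ih
  | lam _ ih => exact .lam ih

theorem Subtm.of_app_left {a b t : Tm Ident} (h : Subtm (.app a b) t) : Subtm a t :=
  (Subtm.appL (.refl a)).trans h

theorem Subtm.of_app_right {a b t : Tm Ident} (h : Subtm (.app a b) t) : Subtm b t :=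
  (Subtm.appR (.refl b)).trans h

theorem Subtm.of_lam {x : Ident} {b t : Tm Ident} (h : Subtm (.lam x b) t) : Subtm b t :=
  (Subtm.lam (.refl b)).trans h

section AssocList

variable {β : Type}

theorem mem_of_lookupL_eq_some {l : List (ℕ × β)} {x : ℕ} {b : β}
    (h : lookupL l x = some b) : (x, b) ∈ l := by
  induction l with
  | nil => simp [lookupL] at h
  | cons p l ih =>
    unfold lookupL at h
    split_ifs at h with hx
    · cases h; subst hx; exact List.mem_cons_self
    · exact List.mem_cons_of_mem _ (ih h)

theorem mem_updL {l : List (ℕ × β)} {x : ℕ} {b : β} {p : ℕ × β}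
    (h : p ∈ updL l x b) : p.2 = b ∨ p ∈ l := by
  obtain ⟨q, hq, rfl⟩ := List.mem_map.1 h
  split_ifs <;> simp [hq]

end AssocList

section GhostMachine

variable {c c' : Closure} {π : PiSt} {ϱ : RhoSt} {σ : StoreI} {ℓ : Loc} {v : VI}

@[simp] theorem inPi_cache : InPi c (.cache ℓ π) ↔ InPi c π :=
  ⟨fun | .cacheI h => h, .cacheI⟩

@[simp] theorem inPi_arg : InPi c (.arg c' π) ↔ c = c' ∨ InPi c π :=
  ⟨fun | .argHere => .inl rfl | .argThere h => .inr h,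
    by rintro (rfl | h); exacts [.argHere, .argThere h]⟩

@[simp] theorem inPi_coe : InPi c (.coe ϱ) ↔ InRho c ϱ :=
  ⟨fun | .coeI h => h, .coeI⟩

@[simp] theorem inRho_cacheN : InRho c (.cacheN ℓ ϱ) ↔ InRho c ϱ :=
  ⟨fun | .cacheN h => h, .cacheN⟩

@[simp] theorem not_inRho_nil : ¬ InRho c .nil := nofun

@[simp] theorem inRho_lamF {x : Ident} : InRho c (.lamF x ϱ) ↔ InRho c ϱ :=
  ⟨fun | .lamF h => h, .lamF⟩

@[simp] theorem inRho_appL {a : Ne} : InRho c (.appL a π) ↔ InPi c π :=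
  ⟨fun | .appL h => h, .appL⟩

@[simp] theorem not_inVI_ne {a : Ne} : ¬ InVI c (.ne a) := nofun

@[simp] theorem inVI_abs {x : Ident} {t : Tm Ident} {e : Env} :
    InVI c (.abs x t e ℓ) ↔ c = (.lam x t, e) := Iff.rfl

@[simp] theorem not_inStoreI_nil : ¬ InStoreI c [] := by simp [InStoreI]

@[simp] theorem inStoreI_cons_todo :
    InStoreI c ((ℓ, .todo c') :: σ) ↔ c = c' ∨ InStoreI c σ := by
  simp [InStoreI, eq_comm]

@[simp] theorem inStoreI_cons_done :
    InStoreI c ((ℓ, .done v) :: σ) ↔ InVI c v ∨ InStoreI c σ := by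
  simp [InStoreI]

theorem InStoreI.of_lookupL_todo (h : lookupL σ ℓ = some (.todo c)) : InStoreI c σ :=
  ⟨_, mem_of_lookupL_eq_some h, .inl rfl⟩

theorem InStoreI.of_lookupL_done (h : lookupL σ ℓ = some (.done v)) (hc : InVI c v) :
    InStoreI c σ :=
  ⟨_, mem_of_lookupL_eq_some h, .inr ⟨v, rfl, hc⟩⟩

theorem InStoreI.of_updL (h : InStoreI c (updL σ ℓ (.done v))) : InStoreI c σ ∨ InVI c v := by
  obtain ⟨p, hp, hc⟩ := h
  rcases mem_updL hp with hpv | hp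
  · exact .inr (by simpa [hpv] using hc)
  · exact .inl ⟨p, hp, hc⟩

def ConfI.ClosuresBelow (t0 : Tm Ident) (k : ConfI) : Prop := ∀ c, ClosInI c k → Subtm c.1 t0

theorem ConfI.closuresBelow_init (t0 : Tm Ident) : (ConfI.init t0).ClosuresBelow t0 := by
  simp [ConfI.ClosuresBelow, ConfI.init, ClosInI, Subtm.refl]

theorem StepI.closuresBelow {t0 : Tm Ident} {k k' : ConfI} (hs : StepI k k')
    (hk : k.ClosuresBelow t0) : k'.ClosuresBelow t0 := by
  cases hs <;> simp only [ConfI.ClosuresBelow, ClosInI, inPi_cache, inPi_arg, inPi_coe,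
    inRho_appL, inRho_cacheN, inRho_lamF, not_inVI_ne, inVI_abs, inStoreI_cons_todo,
    inStoreI_cons_done, false_or, or_imp, forall_and, forall_eq] at hk ⊢
  case r1 => exact ⟨hk.1.of_app_left, ⟨hk.1.of_app_right, hk.2.1⟩, hk.2.2⟩
  case r3 hσ => exact ⟨hk.2.2 _ (.of_lookupL_todo hσ), hk.2⟩
  case r4done hσ => exact ⟨fun c hc => hk.2.2 c (.of_lookupL_done hσ hc), hk.2⟩
  case r4free => exact hk.2
  case r5 => exact ⟨hk.1, hk.2.1, fun c hc => (InStoreI.of_updL hc).elim (hk.2.2 c) (hk.1 c)⟩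
  case r6 => exact ⟨hk.1.of_lam, hk.2.1.2, hk.2.1.1, hk.2.2⟩
  case r7 => exact ⟨hk.1.of_lam, hk.2⟩
  case r8 => exact hk.2
  case r9 => exact ⟨hk.1.1, hk.1.2, hk.2⟩
  all_goals exact hk

theorem ReachI.closuresBelow {t0 : Tm Ident} {k : ConfI} (hr : ReachI (ConfI.init t0) k) :
    k.ClosuresBelow t0 := by
  induction hr with
  | refl => exact ConfI.closuresBelow_init t0
  | step _ hs ih => exact hs.closuresBelow ih

end GhostMachine

section Machine

variable {c : Closure} {σ : Store} {ℓ : Loc} {s : Storable} {v : Value}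

@[simp] theorem inFrame_arg {c' : Closure} : InFrame c (.arg c') ↔ c = c' := Iff.rfl

@[simp] theorem not_inFrame_appL {t : Tm Ident} : ¬ InFrame c (.appL t) := nofun

@[simp] theorem not_inFrame_lamF {x : Ident} : ¬ InFrame c (.lamF x) := nofun

@[simp] theorem not_inFrame_cache : ¬ InFrame c (.cache ℓ) := nofun

@[simp] theorem not_inVal_tm {t : Tm Ident} : ¬ InVal c (.tm t) := nofun

@[simp] theorem inVal_abs {x : Ident} {t : Tm Ident} {e : Env} :
    InVal c (.abs x t e ℓ) ↔ c = (.lam x t, e) := Iff.rfl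

@[simp] theorem inStorable_pend {x : Ident} {t : Tm Ident} {e : Env} :
    InStorable c (.pend x t e) ↔ c = (.lam x t, e) := Iff.rfl

@[simp] theorem inStorable_todo {c' : Closure} : InStorable c (.todo c') ↔ c = c' := Iff.rfl

@[simp] theorem inStorable_done : InStorable c (.done v) ↔ InVal c v := Iff.rfl

@[simp] theorem not_inStore_nil : ¬ InStore c [] := by simp [InStore]

@[simp] theorem inStore_cons : InStore c ((ℓ, s) :: σ) ↔ InStorable c s ∨ InStore c σ := by
  simp [InStore]

theorem InStore.of_lookupL (h : lookupL σ ℓ = some s) (hc : InStorable c s) : InStore c σ :=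
  ⟨_, mem_of_lookupL_eq_some h, hc⟩

theorem InStore.of_updL (h : InStore c (updL σ ℓ (.done v))) : InStore c σ ∨ InVal c v := by
  obtain ⟨p, hp, hc⟩ := h
  rcases mem_updL hp with hpv | hp
  · exact .inr (by simpa [hpv] using hc)
  · exact .inl ⟨p, hp, hc⟩

def Conf.ClosuresBelow (t0 : Tm Ident) (k : Conf) : Prop := ∀ c, ClosIn c k → Subtm c.1 t0

theorem Conf.closuresBelow_init (t0 : Tm Ident) : (Conf.init t0).ClosuresBelow t0 := by
  simp [Conf.ClosuresBelow, Conf.init, ClosIn, Subtm.refl]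

theorem Step.closuresBelow {t0 : Tm Ident} {r : ℕ} {k k' : Conf} (hs : Step r k k')
    (hk : k.ClosuresBelow t0) : k'.ClosuresBelow t0 := by
  cases hs <;> simp only [Conf.ClosuresBelow, ClosIn, List.mem_cons, exists_eq_or_imp,
    inFrame_arg, not_inFrame_appL, not_inFrame_lamF, not_inFrame_cache, not_inVal_tm, inVal_abs,
    inStorable_pend, inStorable_todo, inStorable_done, inStore_cons, false_or, or_imp, forall_and,
    forall_eq] at hk ⊢
  case r1 => exact ⟨hk.1.of_app_left, ⟨hk.1.of_app_right, hk.2.1⟩, hk.2.2⟩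
  case r2 => exact ⟨hk.1, hk.2.1, hk.1, hk.2.2⟩
  case r3 hσ => exact ⟨hk.2.2 _ (.of_lookupL hσ rfl), hk.2⟩
  case r4done hσ => exact ⟨fun c hc => hk.2.2 c (.of_lookupL hσ hc), hk.2⟩
  case r4free => exact hk.2
  case r5 => exact ⟨hk.1, hk.2.1, fun c hc => (InStore.of_updL hc).elim (hk.2.2 c) (hk.1 c)⟩
  case r6 => exact ⟨hk.1.of_lam, hk.2.1.2, hk.2.1.1, hk.2.2⟩
  case r7 => exact ⟨hk.1.of_lam, hk.2⟩
  case r8 hσ _ _ => exact ⟨fun c hc => hk.2.2 c (.of_lookupL hσ hc), hk.2⟩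
  case r9 => exact ⟨hk.1.1, hk.1.2, hk.2⟩
  all_goals exact hk

theorem Reach.closuresBelow {t0 : Tm Ident} {k : Conf} (hr : Reach (Conf.init t0) k) :
    k.ClosuresBelow t0 := by
  induction hr with
  | refl => exact Conf.closuresBelow_init t0
  | step _ hs ih => exact hs.closuresBelow ih

end Machine

/-- Subterm property: every term of the syntactic category of Terms (i.e. the
term of any closure) occurring in a reachable configuration of the ghost
machine RKNLi is a subterm of the source term; consequently, every term
occurring in a closure in a reachable RKNL configuration is a subterm of the
source term. -/
theorem subterm_property :
    (∀ (t0 : Tm Ident) (k : ConfI) (t : Tm Ident) (e : Env),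
        ReachI (ConfI.init t0) k → ClosInI (t, e) k → Subtm t t0) ∧
    (∀ (t0 : Tm Ident) (k : Conf) (t : Tm Ident) (e : Env),
        Reach (Conf.init t0) k → ClosIn (t, e) k → Subtm t t0) :=
  ⟨fun _ _ t e hr => hr.closuresBelow (t, e), fun _ _ t e hr => hr.closuresBelow (t, e)⟩

end RKNL
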